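/- arXiv:2605.22004 — 6 statements merged into one kernel-verified Lean document; each statement's English description precedes it below -/
import Mathlib

section
/- For the family of lines ℓ_C(μ) = w(C) p_C + μ (p_C − (1 − α)) indexed by a finite set I, with the selection rule C^μ choosing at each μ ≥ 0 a maximizer of ℓ_C(μ) (ties broken in favor of larger weight), the map μ ↦ w(C^μ) p_{C^μ} (the intercept of the chosen line) is non-increasing on [0, ∞). -/
/-- With the selection rule C^μ maximizing ℓ_C(μ) = w(C) p_C + μ (p_C − (1−α)) with ties broken
in favor of larger weight, the intercept w(C^μ) p_{C^μ} is non-increasing in μ on [0,∞). -/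
theorem stmt7 {ι : Type*} [Fintype ι] [Nonempty ι]
    (α : ℝ) (hα : α ∈ Set.Ioo (0:ℝ) 1)
    (w p : ι → ℝ) (hw : ∀ C, 0 < w C) (hp : ∀ C, p C ∈ Set.Icc (0:ℝ) 1)
    (sel : ℝ → ι)
    (hmax : ∀ μ ≥ (0:ℝ), ∀ C,
      w C * p C + μ * (p C - (1 - α)) ≤
        w (sel μ) * p (sel μ) + μ * (p (sel μ) - (1 - α)))
    (htie : ∀ μ ≥ (0:ℝ), ∀ C,
      w C * p C + μ * (p C - (1 - α)) =
        w (sel μ) * p (sel μ) + μ * (p (sel μ) - (1 - α)) → w C ≤ w (sel μ)) :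
    ∀ μ₁ μ₂ : ℝ, 0 ≤ μ₁ → μ₁ ≤ μ₂ →
      w (sel μ₂) * p (sel μ₂) ≤ w (sel μ₁) * p (sel μ₁) := by
  intro μ₁ μ₂ h1 h12
  rcases eq_or_lt_of_le h12 with rfl | hlt
  · exact le_refl _
  have hA := hmax μ₁ h1 (sel μ₂)
  have hB := hmax μ₂ (by linarith) (sel μ₁)
  have hpa : p (sel μ₁) ≤ p (sel μ₂) := by nlinarith
  nlinarith
end

section
/- With the setup of the line family ℓ_C(μ) = w(C) p_C + μ (p_C − (1 − α)), C^μ a maximizer of ℓ_C(μ) (ties broken in favor of larger weight), and D^μ = 1{max_C ℓ_C(μ) ≥ 0}, the function μ ↦ (1 − p_{C^μ} − α) D^μ is non-increasing on [0, ∞). -/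
/-- With C^μ maximizing ℓ_C(μ) (ties toward larger weight) and D^μ = 1{max_C ℓ_C(μ) ≥ 0},
the function μ ↦ (1 − p_{C^μ} − α) D^μ is non-increasing on [0,∞). -/
theorem stmt9 {ι : Type*} [Fintype ι] [Nonempty ι]
    (α : ℝ) (hα : α ∈ Set.Ioo (0:ℝ) 1)
    (w p : ι → ℝ) (hw : ∀ C, 0 < w C) (hp : ∀ C, p C ∈ Set.Icc (0:ℝ) 1)
    (sel : ℝ → ι)
    (hmax : ∀ μ ≥ (0:ℝ), ∀ C,
      w C * p C + μ * (p C - (1 - α)) ≤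
        w (sel μ) * p (sel μ) + μ * (p (sel μ) - (1 - α)))
    (htie : ∀ μ ≥ (0:ℝ), ∀ C,
      w C * p C + μ * (p C - (1 - α)) =
        w (sel μ) * p (sel μ) + μ * (p (sel μ) - (1 - α)) → w C ≤ w (sel μ))
    (D : ℝ → ℝ)
    (hD : ∀ μ, D μ = if 0 ≤ Finset.univ.sup' Finset.univ_nonempty
      (fun C => w C * p C + μ * (p C - (1 - α))) then 1 else 0) :
    ∀ μ₁ μ₂ : ℝ, 0 ≤ μ₁ → μ₁ ≤ μ₂ →
      (1 - p (sel μ₂) - α) * D μ₂ ≤ (1 - p (sel μ₁) - α) * D μ₁ := by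
  intro μ₁ μ₂ h1 h12
  have h2 : (0:ℝ) ≤ μ₂ := le_trans h1 h12
  have hsup : ∀ μ, 0 ≤ μ → Finset.univ.sup' Finset.univ_nonempty
      (fun C => w C * p C + μ * (p C - (1 - α))) =
      w (sel μ) * p (sel μ) + μ * (p (sel μ) - (1 - α)) := by
    intro μ hμ
    refine le_antisymm ?_ ?_
    · exact Finset.sup'_le Finset.univ_nonempty
        (fun C => w C * p C + μ * (p C - (1 - α))) (fun C _ => hmax μ hμ C)
    · exact Finset.le_sup' (fun C => w C * p C + μ * (p C - (1 - α)))
        (Finset.mem_univ (sel μ))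
  have hD1 : D μ₁ = if 0 ≤ w (sel μ₁) * p (sel μ₁) + μ₁ * (p (sel μ₁) - (1 - α))
      then 1 else 0 := by rw [hD, hsup μ₁ h1]
  have hD2 : D μ₂ = if 0 ≤ w (sel μ₂) * p (sel μ₂) + μ₂ * (p (sel μ₂) - (1 - α))
      then 1 else 0 := by rw [hD, hsup μ₂ h2]
  by_cases d2 : 0 ≤ w (sel μ₂) * p (sel μ₂) + μ₂ * (p (sel μ₂) - (1 - α))
  · rw [hD2, if_pos d2]
    by_cases d1 : 0 ≤ w (sel μ₁) * p (sel μ₁) + μ₁ * (p (sel μ₁) - (1 - α))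
    · rw [hD1, if_pos d1]
      rcases eq_or_lt_of_le h12 with heq | hlt
      · subst heq
        exact le_refl _
      · have a1 := hmax μ₁ h1 (sel μ₂)
        have a2 := hmax μ₂ h2 (sel μ₁)
        have key : (μ₂ - μ₁) * (p (sel μ₁) - p (sel μ₂)) ≤ 0 := by nlinarith [a1, a2]
        have hle : p (sel μ₁) ≤ p (sel μ₂) := by
          by_contra h
          push_neg at h
          nlinarith [mul_pos (sub_pos.mpr hlt) (sub_pos.mpr h)]
        nlinarith [hle]
    · rw [hD1, if_neg d1]
      push_neg at d1
      have a1 := hmax μ₁ h1 (sel μ₂)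
      have hle : 1 - α ≤ p (sel μ₂) := by
        by_contra h
        push_neg at h
        have hprod : 0 ≤ (μ₂ - μ₁) * ((1 - α) - p (sel μ₂)) :=
          mul_nonneg (by linarith) (by linarith)
        nlinarith [a1, d1, d2, hprod]
      nlinarith [hle]
  · rw [hD2, if_neg d2]
    push_neg at d2
    by_cases d1 : 0 ≤ w (sel μ₁) * p (sel μ₁) + μ₁ * (p (sel μ₁) - (1 - α))
    · rw [hD1, if_pos d1]
      have a2 := hmax μ₂ h2 (sel μ₁)
      have hle : p (sel μ₁) ≤ 1 - α := by
        by_contra h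
        push_neg at h
        have hprod : 0 ≤ (μ₂ - μ₁) * (p (sel μ₁) - (1 - α)) :=
          mul_nonneg (by linarith) (by linarith)
        nlinarith [a2, d1, d2, hprod]
      nlinarith [hle]
    · rw [hD1, if_neg d1]
      simp
end

section
/- In the alternative tie-breaking regime where the selection C^μ at each μ ≥ 0 maximizes ℓ_C(μ) breaking ties in favor of SMALLER weight, the map μ ↦ C^μ is right-continuous: for every μ ≥ 0 there is ε > 0 such that C^{μ'} = C^μ for all μ' ∈ [μ, μ + ε). -/
/-- With ties broken in favor of SMALLER weight and distinct indices giving distinct lines,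
the selection μ ↦ C^μ is right-continuous: locally constant to the right of every μ ≥ 0. -/
theorem stmt11 {ι : Type*} [Fintype ι] [Nonempty ι]
    (α : ℝ) (hα : α ∈ Set.Ioo (0:ℝ) 1)
    (w p : ι → ℝ) (hw : ∀ C, 0 < w C) (hp : ∀ C, p C ∈ Set.Icc (0:ℝ) 1)
    (hdist : ∀ C₁ C₂ : ι, p C₁ = p C₂ → w C₁ * p C₁ = w C₂ * p C₂ → C₁ = C₂)
    (sel : ℝ → ι)
    (hmax : ∀ μ ≥ (0:ℝ), ∀ C,
      w C * p C + μ * (p C - (1 - α)) ≤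
        w (sel μ) * p (sel μ) + μ * (p (sel μ) - (1 - α)))
    (htie : ∀ μ ≥ (0:ℝ), ∀ C,
      w C * p C + μ * (p C - (1 - α)) =
        w (sel μ) * p (sel μ) + μ * (p (sel μ) - (1 - α)) → w (sel μ) ≤ w C) :
    ∀ μ ≥ (0:ℝ), ∃ ε > (0:ℝ), ∀ μ', μ ≤ μ' → μ' < μ + ε → sel μ' = sel μ := by
  intro μ hμ
  classical
  -- maximizers at μ that are not sel μ have strictly smaller slope
  have hA : ∀ C, C ≠ sel μ →
      w C * p C + μ * (p C - (1 - α)) =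
        w (sel μ) * p (sel μ) + μ * (p (sel μ) - (1 - α)) → p C < p (sel μ) := by
    intro C hC heq
    have hwle := htie μ hμ C heq
    have hpne : p C ≠ p (sel μ) := by
      intro hpe
      exact hC (hdist C (sel μ) hpe (by nlinarith [heq]))
    rcases lt_or_gt_of_ne hpne with h | h
    · exact h
    · exfalso
      have hps : 0 < p (sel μ) := by
        rcases ((hp (sel μ)).1).lt_or_eq with h0 | h0
        · exact h0
        · exfalso; nlinarith [hw C, (hp C).1]
      nlinarith [hw C, hw (sel μ)]
  -- choose ε
  set f : ι → ℝ := fun C =>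
    if w C * p C + μ * (p C - (1 - α)) <
        w (sel μ) * p (sel μ) + μ * (p (sel μ) - (1 - α)) then
      (w (sel μ) * p (sel μ) + μ * (p (sel μ) - (1 - α))) -
        (w C * p C + μ * (p C - (1 - α)))
    else 1 with hf
  have hne : (Finset.univ : Finset ι).Nonempty := Finset.univ_nonempty
  refine ⟨Finset.univ.inf' hne f, ?_, ?_⟩
  · rw [gt_iff_lt, Finset.lt_inf'_iff]
    intro C _
    simp only [hf]
    split_ifs with h
    · linarith
    · norm_num
  · intro μ' h1 h2
    rcases h1.lt_or_eq with hlt | heqμ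
    swap
    · rw [← heqμ]
    by_contra hne'
    have hμ' : (0:ℝ) ≤ μ' := le_trans hμ h1
    have hstrict : w (sel μ') * p (sel μ') + μ' * (p (sel μ') - (1 - α)) <
        w (sel μ) * p (sel μ) + μ' * (p (sel μ) - (1 - α)) := by
      rcases (hmax μ hμ (sel μ')).lt_or_eq with h | h
      · -- non-maximizer at μ: use the gap
        have hε : Finset.univ.inf' hne f ≤ f (sel μ') :=
          Finset.inf'_le f (Finset.mem_univ _)
        rw [hf] at hε
        simp only [if_pos h] at hε
        have hgap : μ' - μ < (w (sel μ) * p (sel μ) + μ * (p (sel μ) - (1 - α))) -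
            (w (sel μ') * p (sel μ') + μ * (p (sel μ') - (1 - α))) := by linarith
        nlinarith [(hp (sel μ')).2, (hp (sel μ)).1, hlt]
      · -- tied maximizer at μ: strictly smaller slope
        have hslope := hA (sel μ') hne' h
        nlinarith [hlt]
    exact absurd (hmax μ' hμ' (sel μ)) (not_le.mpr hstrict)
end

section
/- With C^μ selected by maximizing ℓ_C(μ) with ties broken toward smaller weight, the decision indicator D^μ = 1{ℓ_{C^μ}(μ) > 0} is right-continuous in μ on [0, ∞). -/
/-- With C^μ selected by maximizing ℓ_C(μ) with ties broken toward smaller weight,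
the decision indicator D^μ = 1{ℓ_{C^μ}(μ) > 0} is right-continuous in μ on [0,∞). -/
theorem stmt12 {ι : Type*} [Fintype ι] [Nonempty ι]
    (α : ℝ) (hα : α ∈ Set.Ioo (0:ℝ) 1)
    (w p : ι → ℝ) (hw : ∀ C, 0 < w C) (hp : ∀ C, p C ∈ Set.Icc (0:ℝ) 1)
    (sel : ℝ → ι)
    (hmax : ∀ μ ≥ (0:ℝ), ∀ C,
      w C * p C + μ * (p C - (1 - α)) ≤
        w (sel μ) * p (sel μ) + μ * (p (sel μ) - (1 - α)))
    (htie : ∀ μ ≥ (0:ℝ), ∀ C,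
      w C * p C + μ * (p C - (1 - α)) =
        w (sel μ) * p (sel μ) + μ * (p (sel μ) - (1 - α)) → w (sel μ) ≤ w C)
    (D : ℝ → ℝ)
    (hD : ∀ μ, D μ = if 0 < w (sel μ) * p (sel μ) + μ * (p (sel μ) - (1 - α)) then 1 else 0) :
    ∀ μ ≥ (0:ℝ), ∃ ε > (0:ℝ), ∀ μ', μ ≤ μ' → μ' < μ + ε → D μ' = D μ := by
  obtain ⟨hα0, hα1⟩ := hα
  intro μ hμ
  set s := sel μ with hs
  set a := p s - (1 - α) with ha
  set v := w s * p s + μ * a with hv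
  by_cases hpos : 0 < v
  · -- D μ = 1 and stays 1 to the right
    refine ⟨if 0 ≤ a then 1 else v / (-a), ?_, ?_⟩
    · split
      · norm_num
      · next h =>
        push_neg at h
        exact div_pos hpos (by linarith)
    · intro μ' h1 h2
      have hμ' : (0:ℝ) ≤ μ' := le_trans hμ h1
      have key : 0 < w s * p s + μ' * a := by
        by_cases hanneg : 0 ≤ a
        · have : μ * a ≤ μ' * a := mul_le_mul_of_nonneg_right h1 hanneg
          simp only [hv] at hpos
          linarith
        · push_neg at hanneg
          rw [if_neg (not_le.mpr hanneg)] at h2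
          have h3 : μ' - μ < v / (-a) := by linarith
          have h4 : (μ' - μ) * (-a) < v := (lt_div_iff₀ (by linarith : (0:ℝ) < -a)).mp h3
          simp only [hv] at h4
          nlinarith
      have hM := hmax μ' hμ' s
      rw [hD μ', hD μ, if_pos (lt_of_lt_of_le key hM)]
      rw [if_pos hpos]
  · -- max value ≤ 0: all slopes are ≤ 0, so max stays ≤ 0
    push_neg at hpos
    refine ⟨1, one_pos, ?_⟩
    intro μ' h1 h2
    have hμ' : (0:ℝ) ≤ μ' := le_trans hμ h1
    have hslope : ∀ C, p C - (1 - α) ≤ 0 := by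
      intro C
      by_contra h
      push_neg at h
      have hC := hmax μ hμ C
      have hpC : 0 < p C := by linarith
      have h5 : 0 < w C * p C := mul_pos (hw C) hpC
      have h6 : 0 ≤ μ * (p C - (1 - α)) := mul_nonneg hμ (le_of_lt h)
      have : 0 < v := by
        simp only [hv]
        calc (0:ℝ) < w C * p C + μ * (p C - (1 - α)) := by linarith
        _ ≤ _ := hC
      linarith
    set t := sel μ' with ht
    have h3 : w t * p t + μ' * (p t - (1 - α)) ≤ w t * p t + μ * (p t - (1 - α)) := by
      nlinarith [hslope t]
    have h4 := hmax μ hμ t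
    have hpos' : w (sel μ) * p (sel μ) + μ * (p (sel μ) - (1 - α)) ≤ 0 := hpos
    have h3' : w (sel μ') * p (sel μ') + μ' * (p (sel μ') - (1 - α)) ≤
        w (sel μ') * p (sel μ') + μ * (p (sel μ') - (1 - α)) := h3
    have h4' : w (sel μ') * p (sel μ') + μ * (p (sel μ') - (1 - α)) ≤
        w (sel μ) * p (sel μ) + μ * (p (sel μ) - (1 - α)) := h4
    have h5 : w (sel μ') * p (sel μ') + μ' * (p (sel μ') - (1 - α)) ≤ 0 := by linarith
    rw [hD μ', hD μ, if_neg (not_lt.mpr h5), if_neg (not_lt.mpr hpos')]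
end

section
/- Let (X_i, Y_i), i = 1, …, n + m, be i.i.d. random pairs with values in X × Y. Let h_{xy} : X × Y → ℝ and h_x : X → ℝ be measurable score functions with h_{xy}(x, y) ≤ h_x(x) for all (x, y). Define μ_α = min{ μ ≥ 0 : [(1/(n+1)) (1 + Σ_{i=1}^n 1{h_{xy}(X_i, Y_i) > μ})] / [(1/m) (1 ∨ Σ_{i=1}^m 1{h_x(X_{n+i}) > μ})] ≤ α }, with μ_α = ∞ (and all indicators 0 at ∞) if no such μ exists. Then E[ Σ_{i=1}^m 1{h_{xy}(X_{n+i}, Y_{n+i}) > μ_α} / (1 ∨ Σ_{i=1}^m 1{h_x(X_{n+i}) > μ_α}) ] ≤ α. -/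
open MeasureTheory ProbabilityTheory Classical

/-!
Let `μ̂` be the selected threshold and, for a test point `o`, let `c_o = h_xy(X_o, Y_o)` and
`b_o = h_x(X_o)`. If `c_o > μ̂` then also `b_o > μ̂`, so the denominator of the false coverage
proportion is `1 + #{l ≠ o | b_l > μ̂}`, and the inequality defining `μ̂` bounds the contribution of
`o` by `α (n + 1) / m · 1 / (1 + #{i | h_xy(X_i, Y_i) > μ̂})`.

Replace `μ̂` by the threshold `μ̄_o` computed from the pool of the `n + 1` scores `h_xy` of the
calibration points and of `o`, together with the scores `b_l` of the other test points. It equals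
`μ̂` whenever `c_o > μ̂`, and it does not change when `o` is exchanged with a pool member. Hence the
rank weights `1{c_o > μ̄_o} / #{pool scores > μ̄_o}` of the `n + 1` such exchanges sum to at most
`1`, and by exchangeability of the sample the weight of `o` has expectation at most `1 / (n + 1)`.
Summing over the `m` test points gives `α`.
-/

open Filter Topology Finset

section RightLocallyConstant

variable {S : Set ℝ}

theorem csInf_mem_of_eventually_nhdsGE (hS : ∀ μ, ∀ᶠ ν in 𝓝[≥] μ, (ν ∈ S ↔ μ ∈ S))
    (hne : S.Nonempty) (hbdd : BddBelow S) : sInf S ∈ S := by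
  obtain ⟨u, hu, hsub⟩ := mem_nhdsGE_iff_exists_Ico_subset.1 (hS (sInf S))
  obtain ⟨μ, hμ, hμu⟩ := exists_lt_of_csInf_lt hne hu
  exact (hsub ⟨csInf_le hbdd hμ, hμu⟩).1 hμ

theorem exists_rat_mem_lt_of_csInf_lt (hS : ∀ μ, ∀ᶠ ν in 𝓝[≥] μ, (ν ∈ S ↔ μ ∈ S))
    (hne : S.Nonempty) {x : ℝ} (hlt : sInf S < x) : ∃ q : ℚ, (q : ℝ) ∈ S ∧ (q : ℝ) < x := by
  obtain ⟨μ, hμ, hμx⟩ := exists_lt_of_csInf_lt hne hlt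
  obtain ⟨u, hu, hsub⟩ := mem_nhdsGE_iff_exists_Ico_subset.1 (hS μ)
  obtain ⟨q, hμq, hq⟩ := exists_rat_btwn (lt_min hu hμx)
  exact ⟨q, (hsub ⟨hμq.le, hq.trans_le (min_le_left _ _)⟩).2 hμ, hq.trans_le (min_le_right _ _)⟩

theorem measurableSet_setOf_nonempty_of_eventually_nhdsGE {Z : Type*} [MeasurableSpace Z]
    {F : Z → Set ℝ} (hF : ∀ z μ, ∀ᶠ ν in 𝓝[≥] μ, (ν ∈ F z ↔ μ ∈ F z))
    (hmeas : ∀ q : ℚ, MeasurableSet {z | (q : ℝ) ∈ F z}) :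
    MeasurableSet {z | (F z).Nonempty} := by
  have hne : {z | (F z).Nonempty} = ⋃ q : ℚ, {z | (q : ℝ) ∈ F z} := by
    ext z
    simp only [Set.mem_ofPred_eq, Set.mem_iUnion]
    refine ⟨fun h => ?_, fun ⟨q, hq⟩ => ⟨q, hq⟩⟩
    obtain ⟨q, hq, -⟩ := exists_rat_mem_lt_of_csInf_lt (hF z) h (lt_add_one _)
    exact ⟨q, hq⟩
  exact hne ▸ .iUnion hmeas

theorem measurable_sInf_of_eventually_nhdsGE {Z : Type*} [MeasurableSpace Z] {F : Z → Set ℝ}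
    (hF : ∀ z μ, ∀ᶠ ν in 𝓝[≥] μ, (ν ∈ F z ↔ μ ∈ F z)) (hbdd : ∀ z, BddBelow (F z))
    (hmeas : ∀ q : ℚ, MeasurableSet {z | (q : ℝ) ∈ F z}) :
    Measurable fun z => sInf (F z) := by
  refine measurable_of_Iio fun x => ?_
  -- `sInf ∅ = 0` contributes the second piece
  have hpre : (fun z => sInf (F z)) ⁻¹' Set.Iio x =
      (⋃ q : ℚ, {z | (q : ℝ) ∈ F z} ∩ {_z | (q : ℝ) < x}) ∪
        ({z | (F z).Nonempty}ᶜ ∩ {_z | 0 < x}) := by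
    ext z
    by_cases h : (F z).Nonempty
    · simp only [Set.mem_preimage, Set.mem_Iio, Set.mem_union, Set.mem_iUnion, Set.mem_inter_iff,
        Set.mem_ofPred_eq, Set.mem_compl_iff, h, not_true_eq_false, false_and, or_false]
      exact ⟨exists_rat_mem_lt_of_csInf_lt (hF z) h,
        fun ⟨q, hq, hqx⟩ => (csInf_le (hbdd z) hq).trans_lt hqx⟩
    · rw [Set.not_nonempty_iff_eq_empty] at h
      simp [h]
  rw [hpre]
  exact .union (.iUnion fun q => (hmeas q).inter (.const _))
    ((measurableSet_setOf_nonempty_of_eventually_nhdsGE hF hmeas).compl.inter (.const _))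

end RightLocallyConstant

theorem csInf_eq_csInf_of_subset_of_inter_Iio_subset {α : Type*}
    [ConditionallyCompleteLinearOrder α] {S S' : Set α} {x : α}
    (hbdd : BddBelow S') (hmem : sInf S' ∈ S') (hsub : S ⊆ S') (hne : S.Nonempty)
    (hback : S' ∩ Set.Iio x ⊆ S) (hlt : sInf S < x) : sInf S' = sInf S := by
  have hle : sInf S' ≤ sInf S := csInf_le_csInf hbdd hne hsub
  exact hle.antisymm (csInf_le (hbdd.mono hsub) (hback ⟨hmem, hle.trans_lt hlt⟩))

section Counting

variable {ι : Type*}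

noncomputable def countAbove (s : Finset ι) (u : ι → ℝ) (μ : ℝ) : ℝ :=
  ∑ p ∈ s, if μ < u p then 1 else 0

theorem countAbove_nonneg (s : Finset ι) (u : ι → ℝ) (μ : ℝ) : 0 ≤ countAbove s u μ :=
  sum_nonneg fun _ _ => by positivity

theorem countAbove_insert [DecidableEq ι] {s : Finset ι} {o : ι} (ho : o ∉ s) (u : ι → ℝ)
    (μ : ℝ) : countAbove (insert o s) u μ = (if μ < u o then 1 else 0) + countAbove s u μ :=
  sum_insert ho

theorem countAbove_eq_add_erase [DecidableEq ι] {s : Finset ι} {o : ι} (ho : o ∈ s)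
    (u : ι → ℝ) (μ : ℝ) :
    countAbove s u μ = (if μ < u o then 1 else 0) + countAbove (s.erase o) u μ :=
  (add_sum_erase s _ ho).symm

theorem countAbove_comp_perm {s : Finset ι} {σ : Equiv.Perm ι} (hσ : {p | σ p ≠ p} ⊆ s)
    (u : ι → ℝ) (μ : ℝ) : countAbove s (u ∘ σ) μ = countAbove s u μ :=
  σ.sum_comp s (fun p => if μ < u p then 1 else 0) hσ

theorem countAbove_comp_of_forall_eq {s : Finset ι} {σ : ι → ι} (hσ : ∀ p ∈ s, σ p = p)
    (u : ι → ℝ) (μ : ℝ) : countAbove s (u ∘ σ) μ = countAbove s u μ :=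
  sum_congr rfl fun p hp => by rw [Function.comp_apply, hσ p hp]

theorem countAbove_map {κ : Type*} (e : κ ↪ ι) (s : Finset κ) (u : ι → ℝ) (μ : ℝ) :
    countAbove (s.map e) u μ = countAbove s (u ∘ e) μ :=
  sum_map s e _

theorem eventually_nhdsGE_lt_iff (μ x : ℝ) : ∀ᶠ ν in 𝓝[≥] μ, (ν < x ↔ μ < x) := by
  rcases lt_or_ge μ x with h | h
  · filter_upwards [nhdsWithin_le_nhds (Iio_mem_nhds h)] with ν hν
    exact iff_of_true hν h
  · filter_upwards [self_mem_nhdsWithin] with ν (hν : μ ≤ ν)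
    exact iff_of_false (h.trans hν).not_gt h.not_gt

theorem eventually_nhdsGE_countAbove_eq (s : Finset ι) (u : ι → ℝ) (μ : ℝ) :
    ∀ᶠ ν in 𝓝[≥] μ, countAbove s u ν = countAbove s u μ := by
  filter_upwards [(eventually_all_finset s).2 fun p _ => eventually_nhdsGE_lt_iff μ (u p)]
    with ν hν
  exact sum_congr rfl fun p hp => by simp only [hν p hp]

theorem measurable_countAbove {Z : Type*} [MeasurableSpace Z] (s : Finset ι) {u : Z → ι → ℝ}
    {t : Z → ℝ} (hu : Measurable u) (ht : Measurable t) :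
    Measurable fun z => countAbove s (u z) (t z) :=
  Finset.measurable_sum s fun p _ =>
    Measurable.ite (measurableSet_lt ht ((measurable_pi_apply p).comp hu))
      measurable_const measurable_const

end Counting

section ThresholdSet

variable {ι : Type*}

def thresholdSet (Φ : ℝ → ℝ → Prop) (s t : Finset ι) (u v : ι → ℝ) : Set ℝ :=
  {μ | 0 ≤ μ ∧ Φ (countAbove s u μ) (countAbove t v μ)}

variable {Φ : ℝ → ℝ → Prop} {s t : Finset ι}

theorem bddBelow_thresholdSet (u v : ι → ℝ) : BddBelow (thresholdSet Φ s t u v) :=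
  ⟨0, fun _ h => h.1⟩

theorem eventually_nhdsGE_mem_thresholdSet_iff (u v : ι → ℝ) (μ : ℝ) :
    ∀ᶠ ν in 𝓝[≥] μ, (ν ∈ thresholdSet Φ s t u v ↔ μ ∈ thresholdSet Φ s t u v) := by
  filter_upwards [eventually_nhdsGE_lt_iff μ 0, eventually_nhdsGE_countAbove_eq s u μ,
    eventually_nhdsGE_countAbove_eq t v μ] with ν h0 hs ht
  simp only [thresholdSet, Set.mem_ofPred_eq, hs, ht, ← not_lt, h0]

theorem csInf_thresholdSet_mem {u v : ι → ℝ} (hne : (thresholdSet Φ s t u v).Nonempty) :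
    sInf (thresholdSet Φ s t u v) ∈ thresholdSet Φ s t u v :=
  csInf_mem_of_eventually_nhdsGE (eventually_nhdsGE_mem_thresholdSet_iff u v) hne
    (bddBelow_thresholdSet u v)

variable {Z : Type*} [MeasurableSpace Z] {u v : Z → ι → ℝ}

theorem measurableSet_setOf_mem_thresholdSet (hΦ : MeasurableSet {x : ℝ × ℝ | Φ x.1 x.2})
    (hu : Measurable u) (hv : Measurable v) (μ : ℝ) :
    MeasurableSet {z | μ ∈ thresholdSet Φ s t (u z) (v z)} :=
  (MeasurableSet.const _).inter <|
    (measurable_countAbove s hu measurable_const).prodMk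
      (measurable_countAbove t hv measurable_const) hΦ

theorem measurableSet_setOf_thresholdSet_nonempty (hΦ : MeasurableSet {x : ℝ × ℝ | Φ x.1 x.2})
    (hu : Measurable u) (hv : Measurable v) :
    MeasurableSet {z | (thresholdSet Φ s t (u z) (v z)).Nonempty} :=
  measurableSet_setOf_nonempty_of_eventually_nhdsGE
    (fun z => eventually_nhdsGE_mem_thresholdSet_iff (u z) (v z))
    fun q => measurableSet_setOf_mem_thresholdSet hΦ hu hv q

theorem measurable_sInf_thresholdSet (hΦ : MeasurableSet {x : ℝ × ℝ | Φ x.1 x.2})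
    (hu : Measurable u) (hv : Measurable v) :
    Measurable fun z => sInf (thresholdSet Φ s t (u z) (v z)) :=
  measurable_sInf_of_eventually_nhdsGE
    (fun z => eventually_nhdsGE_mem_thresholdSet_iff (u z) (v z))
    (fun z => bddBelow_thresholdSet (u z) (v z))
    fun q => measurableSet_setOf_mem_thresholdSet hΦ hu hv q

end ThresholdSet

section RankWeight

variable {ι : Type*}

noncomputable def rankWeight (s : Finset ι) (o : ι) (u : ι → ℝ) (t : ℝ) : ℝ :=
  if t < u o then (countAbove s u t)⁻¹ else 0

theorem rankWeight_nonneg (s : Finset ι) (o : ι) (u : ι → ℝ) (t : ℝ) :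
    0 ≤ rankWeight s o u t := by
  unfold rankWeight
  split_ifs
  exacts [inv_nonneg.2 (countAbove_nonneg s u t), le_rfl]

theorem rankWeight_le_one [DecidableEq ι] {s : Finset ι} {o : ι} (ho : o ∈ s) (u : ι → ℝ)
    (t : ℝ) : rankWeight s o u t ≤ 1 := by
  unfold rankWeight
  split_ifs with h
  · refine inv_le_one_of_one_le₀ ?_
    rw [countAbove_eq_add_erase ho, if_pos h]
    linarith [countAbove_nonneg (s.erase o) u t]
  · exact zero_le_one

theorem sum_rankWeight_comp_swap_le_one [DecidableEq ι] {s : Finset ι} {o : ι} (ho : o ∈ s)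
    (u : ι → ℝ) (t : ℝ) : ∑ k ∈ s, rankWeight s o (u ∘ Equiv.swap o k) t ≤ 1 := by
  have hswap : ∀ k ∈ s, rankWeight s o (u ∘ Equiv.swap o k) t =
      (if t < u k then 1 else 0) * (countAbove s u t)⁻¹ := fun k hk => by
    have hsupp : {p | Equiv.swap o k p ≠ p} ⊆ s := fun p hp => by
      rcases Equiv.eq_or_eq_of_swap_apply_ne_self hp with rfl | rfl <;> assumption
    simp only [rankWeight, Function.comp_apply, Equiv.swap_apply_left,
      countAbove_comp_perm hsupp, ite_mul, one_mul, zero_mul]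
  rw [sum_congr rfl hswap, ← sum_mul]
  exact mul_inv_le_one

end RankWeight

section Conformal

variable {ι : Type*} (cal test : Finset ι) (α : ℝ)

-- `u` and `v` are the scores `h_xy` and `h_x` of all sample points, indexed by `ι`.

def fcpSet (u v : ι → ℝ) : Set ℝ :=
  thresholdSet
    (fun a b => 1 / ((cal.card : ℝ) + 1) * (1 + a) / (1 / (test.card : ℝ) * max 1 b) ≤ α)
    cal test u v

noncomputable def fcp (u v : ι → ℝ) : ℝ :=
  if (fcpSet cal test α u v).Nonempty then
    countAbove test u (sInf (fcpSet cal test α u v)) /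
      max 1 (countAbove test v (sInf (fcpSet cal test α u v)))
  else 0

variable {cal test α}

theorem fcp_nonneg (u v : ι → ℝ) : 0 ≤ fcp cal test α u v := by
  unfold fcp
  split_ifs
  exacts [div_nonneg (countAbove_nonneg _ _ _) (zero_le_one.trans (le_max_left _ _)), le_rfl]

theorem measurable_fcp {Z : Type*} [MeasurableSpace Z] {u v : Z → ι → ℝ} (hu : Measurable u)
    (hv : Measurable v) : Measurable fun z => fcp cal test α (u z) (v z) := by
  have hinf : Measurable fun z => sInf (fcpSet cal test α (u z) (v z)) :=
    measurable_sInf_thresholdSet (measurableSet_le (by fun_prop) measurable_const) hu hv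
  have hne : MeasurableSet {z | (fcpSet cal test α (u z) (v z)).Nonempty} :=
    measurableSet_setOf_thresholdSet_nonempty (measurableSet_le (by fun_prop) measurable_const)
      hu hv
  exact Measurable.ite hne
    ((measurable_countAbove test hu hinf).div
      (measurable_const.max (measurable_countAbove test hv hinf))) measurable_const

variable (cal test α) [DecidableEq ι]

-- `sInf (poolSet cal test α o u v)` is the threshold `μ̄_o`: it sees the pool `insert o cal` only
-- through an exceedance count. When the set is empty, `sInf ∅ = 0` is harmless: the rank bound
-- holds for every threshold that is invariant under swaps inside the pool.
def poolSet (o : ι) (u v : ι → ℝ) : Set ℝ :=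
  thresholdSet (fun a b => 1 / ((cal.card : ℝ) + 1) * a / (1 / (test.card : ℝ) * (1 + b)) ≤ α)
    (insert o cal) (test.erase o) u v

noncomputable def poolWeight (o : ι) (u v : ι → ℝ) : ℝ :=
  rankWeight (insert o cal) o u (sInf (poolSet cal test α o u v))

variable {cal test α}

theorem poolSet_comp_swap (hdisj : Disjoint cal test) {o k : ι} (hk : k ∈ insert o cal)
    (u v : ι → ℝ) :
    poolSet cal test α o (u ∘ Equiv.swap o k) (v ∘ Equiv.swap o k) = poolSet cal test α o u v := by
  have hsupp : {p | Equiv.swap o k p ≠ p} ⊆ ↑(insert o cal) := fun p hp => by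
    rcases Equiv.eq_or_eq_of_swap_apply_ne_self hp with rfl | rfl
    exacts [mem_insert_self p cal, hk]
  have hfix : ∀ l ∈ test.erase o, Equiv.swap o k l = l := fun l hl => by
    obtain ⟨hlo, hl⟩ := mem_erase.1 hl
    refine Equiv.swap_apply_of_ne_of_ne hlo fun hlk => ?_
    rcases mem_insert.1 hk with rfl | hk
    exacts [hlo hlk, disjoint_left.1 hdisj (hlk ▸ hk) hl]
  simp only [poolSet, thresholdSet, countAbove_comp_perm hsupp, countAbove_comp_of_forall_eq hfix]

theorem sum_poolWeight_comp_swap_le_one (hdisj : Disjoint cal test) (o : ι) (u v : ι → ℝ) :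
    ∑ k ∈ insert o cal,
      poolWeight cal test α o (u ∘ Equiv.swap o k) (v ∘ Equiv.swap o k) ≤ 1 := by
  rw [sum_congr rfl fun k hk => by rw [poolWeight, poolSet_comp_swap hdisj hk]]
  exact sum_rankWeight_comp_swap_le_one (mem_insert_self o cal) u _

theorem fcpSet_subset_poolSet (hdisj : Disjoint cal test) {o : ι} (ho : o ∈ test)
    (u v : ι → ℝ) : fcpSet cal test α u v ⊆ poolSet cal test α o u v := by
  have htest : (0 : ℝ) < test.card := by exact_mod_cast card_pos.2 ⟨o, ho⟩
  rintro μ ⟨hμ0, hμ⟩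
  refine ⟨hμ0, le_trans (div_le_div₀ ?_ ?_ ?_ ?_) hμ⟩
  · have := countAbove_nonneg cal u μ
    positivity
  · rw [countAbove_insert (disjoint_right.1 hdisj ho)]
    gcongr
    split_ifs <;> norm_num
  · have := countAbove_nonneg test v μ
    positivity
  · rw [countAbove_eq_add_erase ho]
    gcongr
    refine max_le (by linarith [countAbove_nonneg (test.erase o) v μ]) ?_
    gcongr
    split_ifs <;> norm_num

theorem mem_fcpSet_of_mem_poolSet (hdisj : Disjoint cal test) {o : ι} (ho : o ∈ test)
    {u v : ι → ℝ} (huv : u o ≤ v o) {μ : ℝ} (hμo : μ < u o)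
    (h : μ ∈ poolSet cal test α o u v) : μ ∈ fcpSet cal test α u v := by
  obtain ⟨hμ0, hμ⟩ := h
  refine ⟨hμ0, show _ ≤ α from ?_⟩
  rw [countAbove_insert (disjoint_right.1 hdisj ho), if_pos hμo] at hμ
  rwa [countAbove_eq_add_erase ho, if_pos (hμo.trans_le huv),
    max_eq_right (by linarith [countAbove_nonneg (test.erase o) v μ])]

theorem csInf_poolSet_eq (hdisj : Disjoint cal test) {o : ι} (ho : o ∈ test) {u v : ι → ℝ}
    (huv : u o ≤ v o) (hne : (fcpSet cal test α u v).Nonempty)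
    (hlt : sInf (fcpSet cal test α u v) < u o) :
    sInf (poolSet cal test α o u v) = sInf (fcpSet cal test α u v) :=
  csInf_eq_csInf_of_subset_of_inter_Iio_subset (bddBelow_thresholdSet u v)
    (csInf_thresholdSet_mem (hne.mono (fcpSet_subset_poolSet hdisj ho u v)))
    (fcpSet_subset_poolSet hdisj ho u v) hne
    (fun _ ⟨h, hμ⟩ => mem_fcpSet_of_mem_poolSet hdisj ho huv hμ h) hlt

theorem inv_max_one_le_poolWeight (hdisj : Disjoint cal test) {o : ι} (ho : o ∈ test)
    {u v : ι → ℝ} (huv : u o ≤ v o) (hne : (fcpSet cal test α u v).Nonempty)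
    (hlt : sInf (fcpSet cal test α u v) < u o) :
    (max 1 (countAbove test v (sInf (fcpSet cal test α u v))))⁻¹ ≤
      α * (cal.card + 1) / test.card * poolWeight cal test α o u v := by
  set μ := sInf (fcpSet cal test α u v)
  obtain ⟨-, hμ⟩ : μ ∈ fcpSet cal test α u v := csInf_thresholdSet_mem hne
  have hweight : poolWeight cal test α o u v = (1 + countAbove cal u μ)⁻¹ := by
    rw [poolWeight, rankWeight, csInf_poolSet_eq hdisj ho huv hne hlt, if_pos hlt,
      countAbove_insert (disjoint_right.1 hdisj ho), if_pos hlt]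
  have htest : (0 : ℝ) < test.card := by exact_mod_cast card_pos.2 ⟨o, ho⟩
  have hA := countAbove_nonneg cal u μ
  have hB : (1 : ℝ) ≤ max 1 (countAbove test v μ) := le_max_left _ _
  rw [hweight]
  change 1 / (↑cal.card + 1) * (1 + _) / (1 / ↑test.card * _) ≤ α at hμ
  rw [div_le_iff₀ (by positivity)] at hμ
  rw [inv_le_iff_one_le_mul₀ (by positivity)]
  field_simp at hμ ⊢
  linarith

theorem fcp_le_sum_poolWeight (hα : 0 ≤ α) (hdisj : Disjoint cal test) {u v : ι → ℝ}
    (huv : ∀ o ∈ test, u o ≤ v o) :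
    fcp cal test α u v ≤
      α * (cal.card + 1) / test.card * ∑ o ∈ test, poolWeight cal test α o u v := by
  have hc : 0 ≤ α * (cal.card + 1) / test.card := by positivity
  have hweight : ∀ o, 0 ≤ poolWeight cal test α o u v := fun o => rankWeight_nonneg _ _ _ _
  unfold fcp
  split_ifs with hne
  · rw [countAbove, sum_div, mul_sum]
    refine sum_le_sum fun o ho => ?_
    split_ifs with hlt
    · rw [one_div]
      exact inv_max_one_le_poolWeight hdisj ho (huv o ho) hne hlt
    · rw [zero_div]
      exact mul_nonneg hc (hweight o)
  · exact mul_nonneg hc (sum_nonneg fun o _ => hweight o)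

theorem measurable_poolWeight {Z : Type*} [MeasurableSpace Z] {u v : Z → ι → ℝ} (o : ι)
    (hu : Measurable u) (hv : Measurable v) :
    Measurable fun z => poolWeight cal test α o (u z) (v z) := by
  have hinf : Measurable fun z => sInf (poolSet cal test α o (u z) (v z)) :=
    measurable_sInf_thresholdSet (measurableSet_le (by fun_prop) measurable_const) hu hv
  exact Measurable.ite (measurableSet_lt hinf ((measurable_pi_apply o).comp hu))
    (measurable_countAbove _ hu hinf).inv measurable_const

end Conformal

section Exchangeability

variable {ι E : Type*} [MeasurableSpace E] (P : Measure E)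

theorem MeasurableEquiv.coe_piCongrLeft_const_symm (σ : Equiv.Perm ι) :
    ⇑(MeasurableEquiv.piCongrLeft (fun _ : ι => E) σ.symm) = fun z => z ∘ σ := by
  ext z i
  simp [MeasurableEquiv.piCongrLeft, Equiv.piCongrLeft]

variable [Fintype ι]

theorem measurePreserving_comp_perm [SigmaFinite P] (σ : Equiv.Perm ι) :
    MeasurePreserving (fun z : ι → E => z ∘ σ) (Measure.pi fun _ => P) (Measure.pi fun _ => P) :=
  MeasurableEquiv.coe_piCongrLeft_const_symm (E := E) σ ▸
    measurePreserving_piCongrLeft (fun _ => P) σ.symm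

theorem integral_comp_perm [SigmaFinite P] (σ : Equiv.Perm ι) (G : (ι → E) → ℝ) :
    ∫ z, G (z ∘ σ) ∂Measure.pi (fun _ => P) = ∫ z, G z ∂Measure.pi fun _ => P := by
  have h := (measurePreserving_piCongrLeft (fun _ => P) σ.symm).integral_comp' G
  rwa [MeasurableEquiv.coe_piCongrLeft_const_symm] at h

theorem card_mul_integral_le_one_of_sum_comp_perm_le_one [IsProbabilityMeasure P] {κ : Type*}
    (s : Finset κ) (σ : κ → Equiv.Perm ι) {G : (ι → E) → ℝ}
    (hG : Integrable G (Measure.pi fun _ => P))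
    (hsum : ∀ z, ∑ k ∈ s, G (z ∘ σ k) ≤ 1) :
    s.card * ∫ z, G z ∂Measure.pi (fun _ => P) ≤ 1 := by
  have hint : ∀ k, Integrable (fun z => G (z ∘ σ k)) (Measure.pi fun _ => P) := fun k =>
    (measurePreserving_comp_perm P (σ k)).integrable_comp_of_integrable hG
  calc s.card * ∫ z, G z ∂Measure.pi (fun _ => P)
      = ∑ k ∈ s, ∫ z, G (z ∘ σ k) ∂Measure.pi (fun _ => P) := by
        simp [integral_comp_perm]
    _ = ∫ z, ∑ k ∈ s, G (z ∘ σ k) ∂Measure.pi (fun _ => P) :=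
        (integral_finsetSum s fun k _ => hint k).symm
    _ ≤ ∫ _, 1 ∂Measure.pi (fun _ => P) :=
        integral_mono (integrable_finsetSum s fun k _ => hint k) (integrable_const 1) hsum
    _ = 1 := by simp

end Exchangeability

section Integrated

variable {ι E : Type*} [Fintype ι] [DecidableEq ι] [MeasurableSpace E] (P : Measure E)
  [IsProbabilityMeasure P] {cal test : Finset ι} {α : ℝ} {f g : E → ℝ}

theorem integrable_poolWeight (hf : Measurable f) (hg : Measurable g) (o : ι) :
    Integrable (fun z : ι → E => poolWeight cal test α o (f ∘ z) (g ∘ z))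
      (Measure.pi fun _ => P) := by
  refine .of_bound (measurable_poolWeight o (by fun_prop) (by fun_prop)).aestronglyMeasurable 1
    (ae_of_all _ fun z => ?_)
  rw [poolWeight, Real.norm_of_nonneg (rankWeight_nonneg _ _ _ _)]
  exact rankWeight_le_one (mem_insert_self o cal) _ _

theorem integral_poolWeight_le (hdisj : Disjoint cal test) (hf : Measurable f)
    (hg : Measurable g) {o : ι} (ho : o ∉ cal) :
    ∫ z, poolWeight cal test α o (f ∘ z) (g ∘ z) ∂Measure.pi (fun _ => P) ≤
      1 / (cal.card + 1) := by
  have h := card_mul_integral_le_one_of_sum_comp_perm_le_one P (insert o cal) (Equiv.swap o)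
    (integrable_poolWeight P (α := α) hf hg o)
    fun z => sum_poolWeight_comp_swap_le_one (α := α) hdisj o (f ∘ z) (g ∘ z)
  rw [card_insert_of_notMem ho, Nat.cast_succ] at h
  rw [le_div_iff₀ (by positivity)]
  linarith

theorem integral_fcp_le (hα : 0 ≤ α) (hdisj : Disjoint cal test) (hf : Measurable f)
    (hg : Measurable g) (hfg : ∀ e, f e ≤ g e) :
    ∫ z, fcp cal test α (f ∘ z) (g ∘ z) ∂Measure.pi (fun _ => P) ≤ α := by
  set c : ℝ := α * (cal.card + 1) / test.card
  calc ∫ z, fcp cal test α (f ∘ z) (g ∘ z) ∂Measure.pi (fun _ => P)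
      ≤ ∫ z, c * ∑ o ∈ test, poolWeight cal test α o (f ∘ z) (g ∘ z) ∂Measure.pi (fun _ => P) :=
        integral_mono_of_nonneg (ae_of_all _ fun z => fcp_nonneg _ _)
          ((integrable_finsetSum test fun o _ => integrable_poolWeight P hf hg o).const_mul c)
          (ae_of_all _ fun z => fcp_le_sum_poolWeight hα hdisj fun o _ => hfg (z o))
    _ = c * ∑ o ∈ test, ∫ z, poolWeight cal test α o (f ∘ z) (g ∘ z) ∂Measure.pi (fun _ => P) := by
        rw [integral_const_mul, integral_finsetSum test fun o _ => integrable_poolWeight P hf hg o]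
    _ ≤ c * ∑ _o ∈ test, 1 / ((cal.card : ℝ) + 1) := by
        gcongr with o ho
        exact integral_poolWeight_le P hdisj hf hg (disjoint_right.1 hdisj ho)
    _ ≤ α := by
        rw [sum_const, nsmul_eq_mul, show c * (test.card * (1 / ((cal.card : ℝ) + 1))) =
          α * (test.card / test.card) by simp only [c]; field_simp]
        exact mul_le_of_le_one_right hα (div_self_le_one _)

end Integrated

theorem disjoint_map_castAddEmb_natAddEmb (n m : ℕ) :
    Disjoint (univ.map (Fin.castAddEmb m : Fin n ↪ Fin (n + m)))
      (univ.map (Fin.natAddEmb n : Fin m ↪ Fin (n + m))) := by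
  refine disjoint_left.2 fun p hcal htest => ?_
  obtain ⟨i, -, rfl⟩ := Finset.mem_map.1 hcal
  obtain ⟨l, -, hl⟩ := Finset.mem_map.1 htest
  have := congrArg Fin.val hl
  simp only [Fin.natAddEmb_apply, Fin.castAddEmb_apply, Fin.val_natAdd, Fin.val_castAdd] at this
  omega

theorem stmt14_general {Ω 𝓧 𝓨 : Type*} [MeasureSpace Ω]
    [MeasurableSpace 𝓧] [MeasurableSpace 𝓨]
    (n m : ℕ) (α : ℝ) (hα : α ∈ Set.Ioo (0:ℝ) 1)
    (X : Fin (n + m) → Ω → 𝓧) (Y : Fin (n + m) → Ω → 𝓨)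
    (P : Measure (𝓧 × 𝓨)) [IsProbabilityMeasure P]
    (hmeas : ∀ i, Measurable (fun ω => (X i ω, Y i ω)))
    (hlaw : ∀ i, Measure.map (fun ω => (X i ω, Y i ω)) ℙ = P)
    (hindep : iIndepFun (fun i ω => (X i ω, Y i ω)) ℙ)
    (hxy : 𝓧 × 𝓨 → ℝ) (hx : 𝓧 → ℝ)
    (hxym : Measurable hxy) (hxm : Measurable hx)
    (hdom : ∀ x y, hxy (x, y) ≤ hx x)
    -- the (random) set of feasible thresholds
    (S : Ω → Set ℝ)
    (hS : ∀ ω, S ω = {μ : ℝ | 0 ≤ μ ∧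
      ((1 / ((n : ℝ) + 1)) *
          (1 + ∑ i : Fin n,
            (if μ < hxy (X (Fin.castAdd m i) ω, Y (Fin.castAdd m i) ω) then (1:ℝ) else 0))) /
        ((1 / (m : ℝ)) *
          max 1 (∑ i : Fin m,
            (if μ < hx (X (Fin.natAdd n i) ω) then (1:ℝ) else 0))) ≤ α}) :
    ∫ ω,
      (if (S ω).Nonempty then
        (∑ i : Fin m,
            (if sInf (S ω) < hxy (X (Fin.natAdd n i) ω, Y (Fin.natAdd n i) ω) then (1:ℝ) else 0)) /
          max 1 (∑ i : Fin m,
            (if sInf (S ω) < hx (X (Fin.natAdd n i) ω) then (1:ℝ) else 0))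
      else 0) ∂ℙ ≤ α := by
  set cal := univ.map (Fin.castAddEmb m : Fin n ↪ Fin (n + m))
  set test := univ.map (Fin.natAddEmb n : Fin m ↪ Fin (n + m))
  set W : Ω → Fin (n + m) → 𝓧 × 𝓨 := fun ω i => (X i ω, Y i ω)
  have hW : Measurable W := measurable_pi_lambda _ hmeas
  have hWlaw : Measure.map W ℙ = Measure.pi fun _ => P := by
    rw [hindep.map_fun_eq_pi_map fun i => (hmeas i).aemeasurable]
    simp only [hlaw]
  have hF : Measurable fun z : Fin (n + m) → 𝓧 × 𝓨 =>
      fcp cal test α (hxy ∘ z) ((hx ∘ Prod.fst) ∘ z) :=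
    measurable_fcp (by fun_prop) (by fun_prop)
  have hS' : ∀ ω, S ω = fcpSet cal test α (hxy ∘ W ω) ((hx ∘ Prod.fst) ∘ W ω) := fun ω => by
    simp only [hS, fcpSet, thresholdSet, cal, test, countAbove_map, card_map, card_univ,
      Fintype.card_fin]
    rfl
  calc _ = ∫ ω, fcp cal test α (hxy ∘ W ω) ((hx ∘ Prod.fst) ∘ W ω) ∂ℙ :=
        integral_congr_ae <| ae_of_all _ fun ω => by
          simp only [← hS' ω, fcp, test, countAbove_map]
          rfl
    _ = ∫ z, fcp cal test α (hxy ∘ z) ((hx ∘ Prod.fst) ∘ z) ∂Measure.pi fun _ => P := by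
        rw [← hWlaw, integral_map hW.aemeasurable (hWlaw ▸ hF.aestronglyMeasurable)]
    _ ≤ α := integral_fcp_le P hα.1.le (disjoint_map_castAddEmb_natAddEmb n m) hxym
        (hxm.comp measurable_fst) fun e => hdom e.1 e.2

/-- FCR-type bound for thresholding dominated scores (Lemma: alternative formulation).
With iid pairs, scores h_{xy}(x,y) ≤ h_x(x), and μ_α the smallest μ ≥ 0 at which the
calibration-estimated FCP drops below α (∞, i.e. all indicators 0, if none exists), the
expected false coverage proportion on the test sample is at most α. -/
theorem stmt14 {Ω 𝓧 𝓨 : Type*} [MeasureSpace Ω] [IsProbabilityMeasure (ℙ : Measure Ω)]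
    [MeasurableSpace 𝓧] [MeasurableSpace 𝓨]
    (n m : ℕ) (hn : 1 ≤ n) (hm : 1 ≤ m) (α : ℝ) (hα : α ∈ Set.Ioo (0:ℝ) 1)
    (X : Fin (n + m) → Ω → 𝓧) (Y : Fin (n + m) → Ω → 𝓨)
    (P : Measure (𝓧 × 𝓨)) [IsProbabilityMeasure P]
    (hmeas : ∀ i, Measurable (fun ω => (X i ω, Y i ω)))
    (hlaw : ∀ i, Measure.map (fun ω => (X i ω, Y i ω)) ℙ = P)
    (hindep : iIndepFun (fun i ω => (X i ω, Y i ω)) ℙ)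
    (hxy : 𝓧 × 𝓨 → ℝ) (hx : 𝓧 → ℝ)
    (hxym : Measurable hxy) (hxm : Measurable hx)
    (hdom : ∀ x y, hxy (x, y) ≤ hx x)
    -- the (random) set of feasible thresholds
    (S : Ω → Set ℝ)
    (hS : ∀ ω, S ω = {μ : ℝ | 0 ≤ μ ∧
      ((1 / ((n : ℝ) + 1)) *
          (1 + ∑ i : Fin n,
            (if μ < hxy (X (Fin.castAdd m i) ω, Y (Fin.castAdd m i) ω) then (1:ℝ) else 0))) /
        ((1 / (m : ℝ)) *
          max 1 (∑ i : Fin m,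
            (if μ < hx (X (Fin.natAdd n i) ω) then (1:ℝ) else 0))) ≤ α}) :
    ∫ ω,
      (if (S ω).Nonempty then
        (∑ i : Fin m,
            (if sInf (S ω) < hxy (X (Fin.natAdd n i) ω, Y (Fin.natAdd n i) ω) then (1:ℝ) else 0)) /
          max 1 (∑ i : Fin m,
            (if sInf (S ω) < hx (X (Fin.natAdd n i) ω) then (1:ℝ) else 0))
      else 0) ∂ℙ ≤ α :=
  stmt14_general n m α hα X Y P hmeas hlaw hindep hxy hx hxym hxm hdom S hS
end

section
/- Suppose (X_i, Y_i), i ∈ [n + m], are i.i.d. from P_{XY}, and let D : X → {0, 1} and C : X → 2^Y be fixed (non-random, measurable) selection and prediction-set rules. Then FCR(D, C) = mFCR(D, C) · P(Σ_{i=1}^m D(X_{n+i}) > 0), where FCR(D, C) = E[ Σ_{i∈[m]} 1{Y_{n+i} ∉ C(X_{n+i})} D(X_{n+i}) / (1 ∨ Σ_{i∈[m]} D(X_{n+i})) ] and mFCR(D, C) = E[1{Y ∉ C(X)} D(X)] / E[D(X)] (with the convention 0/0 = 0). -/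
/-!
Write `S = ∑ᵢ D(X_{n+i})` and `S₋ᵢ = S - D(X_{n+i})`. Where `D(X_{n+i}) = 1` we have
`1 ∨ S = 1 + S₋ᵢ`, and `S₋ᵢ` is independent of `(X_{n+i}, Y_{n+i})`. Hence for every `f`
vanishing where `D = 0`, `E[f(X_{n+i}, Y_{n+i}) / (1 ∨ S)] = E_P[f] · E[1 / (1 + S₋ᵢ)]`.
Summing over `i` with `f = 1{y ∉ C(x)} D(x)` gives `FCR = E[1{Y ∉ C(X)} D(X)] · K`, and with
`f = D`, since `S / (1 ∨ S) = 1{S > 0}`, gives `P(S > 0) = E[D(X)] · K`, for the same constant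
`K = ∑ᵢ E[1 / (1 + S₋ᵢ)]`.
-/

open MeasureTheory ProbabilityTheory Classical

open Finset

section ZeroOneSums

variable {ι : Type*} [Fintype ι] {b : ι → ℝ}

lemma sum_div_max_one_sum (hb : ∀ j, b j = 0 ∨ b j = 1) :
    (∑ j, b j) / max 1 (∑ j, b j) = if 0 < ∑ j, b j then 1 else 0 := by
  have hb0 : ∀ j, 0 ≤ b j := fun j => by rcases hb j with h | h <;> simp [h]
  split_ifs with hpos
  · obtain ⟨j, -, hj⟩ := exists_ne_zero_of_sum_ne_zero hpos.ne'
    have hone : 1 ≤ ∑ j, b j :=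
      (hb j).resolve_left hj ▸ single_le_sum (fun j _ => hb0 j) (mem_univ j)
    rw [max_eq_right hone, div_self hpos.ne']
  · rw [le_antisymm (not_lt.1 hpos) (sum_nonneg fun j _ => hb0 j), zero_div]

variable [DecidableEq ι]

lemma max_one_sum_eq_one_add_sum_erase (hb : ∀ j, 0 ≤ b j) {i : ι} (hi : b i = 1) :
    max 1 (∑ j, b j) = 1 + ∑ j ∈ univ.erase i, b j := by
  rw [← add_sum_erase univ b (mem_univ i), hi]
  exact max_eq_right (le_add_of_nonneg_right (sum_nonneg fun j _ => hb j))

lemma div_max_one_sum_eq_mul_inv (hb : ∀ j, b j = 0 ∨ b j = 1) {i : ι} {x : ℝ}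
    (hx : b i = 0 → x = 0) :
    x / max 1 (∑ j, b j) = x * (1 + ∑ j ∈ univ.erase i, b j)⁻¹ := by
  rcases hb i with hi | hi
  · simp [hx hi]
  · rw [max_one_sum_eq_one_add_sum_erase (fun j => by rcases hb j with h | h <;> simp [h]) hi,
      div_eq_mul_inv]

end ZeroOneSums

section SelfNormalized

variable {Ω E ι : Type*} [MeasurableSpace Ω] {μ : Measure Ω} [MeasurableSpace E]
  [Fintype ι] [DecidableEq ι] {Z : ι → Ω → E} {P : Measure E} {d f : E → ℝ}

lemma integrable_of_eq_zero_or_eq_one [IsFiniteMeasure P] (hd : ∀ q, d q = 0 ∨ d q = 1)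
    (hdm : Measurable d) : Integrable d P :=
  .of_bound hdm.aestronglyMeasurable 1 (.of_forall fun q => by rcases hd q with h | h <;> simp [h])

lemma integral_div_max_one_sum_eq (hZ : ∀ i, Measurable (Z i)) (hlaw : ∀ i, μ.map (Z i) = P)
    (hindep : iIndepFun Z μ) (hd : ∀ q, d q = 0 ∨ d q = 1) (hdm : Measurable d)
    (hf : Measurable f) (hfd : ∀ q, d q = 0 → f q = 0) (i : ι) :
    ∫ ω, f (Z i ω) / max 1 (∑ j, d (Z j ω)) ∂μ
      = (∫ q, f q ∂P) * ∫ ω, (1 + ∑ j ∈ univ.erase i, d (Z j ω))⁻¹ ∂μ := by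
  have hpair : iIndepFun (fun j ω => (f (Z j ω), d (Z j ω))) μ :=
    hindep.comp (fun _ q => (f q, d q)) fun _ => hf.prodMk hdm
  have hrest := hpair.indepFun_finsetSum_of_notMem (fun j => (hf.prodMk hdm).comp (hZ j))
    (notMem_erase i univ)
  have hindep_i : IndepFun (fun ω => f (Z i ω))
      (fun ω => (1 + ∑ j ∈ univ.erase i, d (Z j ω))⁻¹) μ := by
    have hrest_eq : (fun ω => (1 + ∑ j ∈ univ.erase i, d (Z j ω))⁻¹)
        = (fun p : ℝ × ℝ => (1 + p.2)⁻¹) ∘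
            ∑ j ∈ univ.erase i, fun ω => (f (Z j ω), d (Z j ω)) := by
      ext ω
      simp only [Function.comp_apply, Finset.sum_apply, Prod.snd_sum]
    rw [hrest_eq]
    exact (hrest.comp (φ := fun p : ℝ × ℝ => (1 + p.2)⁻¹) (by fun_prop) measurable_fst).symm
  calc ∫ ω, f (Z i ω) / max 1 (∑ j, d (Z j ω)) ∂μ
      = ∫ ω, f (Z i ω) * (1 + ∑ j ∈ univ.erase i, d (Z j ω))⁻¹ ∂μ :=
        integral_congr_ae <| .of_forall fun ω =>
          div_max_one_sum_eq_mul_inv (fun j => hd _) (hfd _)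
    _ = (∫ ω, f (Z i ω) ∂μ) * ∫ ω, (1 + ∑ j ∈ univ.erase i, d (Z j ω))⁻¹ ∂μ :=
        hindep_i.integral_mul_eq_mul_integral (hf.comp (hZ i)).aestronglyMeasurable
          ((measurable_const.add (measurable_sum _ fun j _ => hdm.comp (hZ j))).inv
            |>.aestronglyMeasurable)
    _ = (∫ q, f q ∂P) * ∫ ω, (1 + ∑ j ∈ univ.erase i, d (Z j ω))⁻¹ ∂μ := by
        rw [← hlaw i, integral_map (hZ i).aemeasurable hf.aestronglyMeasurable]

lemma integral_sum_div_max_one_sum_eq [IsFiniteMeasure P] (hZ : ∀ i, Measurable (Z i))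
    (hlaw : ∀ i, μ.map (Z i) = P) (hindep : iIndepFun Z μ) (hd : ∀ q, d q = 0 ∨ d q = 1)
    (hdm : Measurable d) (hf : Measurable f) (hfi : Integrable f P)
    (hfd : ∀ q, d q = 0 → f q = 0) :
    ∫ ω, (∑ i, f (Z i ω)) / max 1 (∑ j, d (Z j ω)) ∂μ
      = (∫ q, f q ∂P) * ∑ i, ∫ ω, (1 + ∑ j ∈ univ.erase i, d (Z j ω))⁻¹ ∂μ := by
  have hint : ∀ i, Integrable (fun ω => f (Z i ω) / max 1 (∑ j, d (Z j ω))) μ := by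
    intro i
    have hfZ : Integrable (fun ω => f (Z i ω)) μ := (hlaw i ▸ hfi).comp_measurable (hZ i)
    refine hfZ.mono ((hf.comp (hZ i)).div (measurable_const.max
      (measurable_sum _ fun j _ => hdm.comp (hZ j)))).aestronglyMeasurable (.of_forall fun ω => ?_)
    rw [norm_div, Real.norm_of_nonneg (zero_le_one.trans (le_max_left _ _))]
    exact div_le_self (norm_nonneg _) (le_max_left _ _)
  simp_rw [sum_div, integral_finsetSum _ fun i _ => hint i, mul_sum]
  exact sum_congr rfl fun i _ => integral_div_max_one_sum_eq hZ hlaw hindep hd hdm hf hfd i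

lemma measureReal_sum_pos_eq [IsFiniteMeasure P] (hZ : ∀ i, Measurable (Z i))
    (hlaw : ∀ i, μ.map (Z i) = P) (hindep : iIndepFun Z μ) (hd : ∀ q, d q = 0 ∨ d q = 1)
    (hdm : Measurable d) :
    μ.real {ω | 0 < ∑ j, d (Z j ω)}
      = (∫ q, d q ∂P) * ∑ i, ∫ ω, (1 + ∑ j ∈ univ.erase i, d (Z j ω))⁻¹ ∂μ := by
  rw [← integral_sum_div_max_one_sum_eq hZ hlaw hindep hd hdm hdm
    (integrable_of_eq_zero_or_eq_one hd hdm) fun _ => id]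
  simp_rw [sum_div_max_one_sum fun j => hd (Z j _)]
  have hpos : MeasurableSet {ω | 0 < ∑ j, d (Z j ω)} :=
    measurableSet_lt measurable_const (measurable_sum _ fun j _ => hdm.comp (hZ j))
  rw [← integral_indicator_one hpos]
  rfl

end SelfNormalized

theorem stmt15_general {Ω 𝓧 𝓨 : Type*} [MeasureSpace Ω]
    [MeasurableSpace 𝓧] [MeasurableSpace 𝓨]
    (n m : ℕ)
    (X : Fin (n + m) → Ω → 𝓧) (Y : Fin (n + m) → Ω → 𝓨)
    (P : Measure (𝓧 × 𝓨)) [IsProbabilityMeasure P]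
    (hmeas : ∀ i, Measurable (fun ω => (X i ω, Y i ω)))
    (hlaw : ∀ i, Measure.map (fun ω => (X i ω, Y i ω)) ℙ = P)
    (hindep : iIndepFun (fun i ω => (X i ω, Y i ω)) ℙ)
    (D : 𝓧 → ℝ) (hD01 : ∀ x, D x = 0 ∨ D x = 1) (hDmeas : Measurable D)
    (C : 𝓧 → Set 𝓨) (hCmeas : MeasurableSet {q : 𝓧 × 𝓨 | q.2 ∈ C q.1}) :
    ∫ ω,
      (∑ i : Fin m,
          (if Y (Fin.natAdd n i) ω ∈ C (X (Fin.natAdd n i) ω) then (0:ℝ) else 1) *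
            D (X (Fin.natAdd n i) ω)) /
        max 1 (∑ i : Fin m, D (X (Fin.natAdd n i) ω)) ∂ℙ
      = ((∫ q, (if q.2 ∈ C q.1 then (0:ℝ) else 1) * D q.1 ∂P) / (∫ q, D q.1 ∂P)) *
        (ℙ {ω | 0 < ∑ i : Fin m, D (X (Fin.natAdd n i) ω)}).toReal := by
  set Z : Fin m → Ω → 𝓧 × 𝓨 := fun i ω => (X (Fin.natAdd n i) ω, Y (Fin.natAdd n i) ω)
  have hZ : ∀ i, Measurable (Z i) := fun i => hmeas _
  have hlawZ : ∀ i, Measure.map (Z i) ℙ = P := fun i => hlaw _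
  have hindepZ : iIndepFun Z ℙ := hindep.precomp (Fin.natAdd_injective m n)
  set d : 𝓧 × 𝓨 → ℝ := fun q => D q.1
  set g : 𝓧 × 𝓨 → ℝ := fun q => (if q.2 ∈ C q.1 then (0:ℝ) else 1) * D q.1
  have hd : ∀ q, d q = 0 ∨ d q = 1 := fun q => hD01 q.1
  have hdm : Measurable d := hDmeas.comp measurable_fst
  have hgm : Measurable g := (Measurable.ite hCmeas measurable_const measurable_const).mul hdm
  have hg_bounds : ∀ q, 0 ≤ g q ∧ g q ≤ d q := fun q => by
    simp only [g, d]
    rcases hD01 q.1 with h | h <;> split_ifs <;> simp [h]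
  have hdi : Integrable d P := integrable_of_eq_zero_or_eq_one hd hdm
  have hgi : Integrable g P := hdi.mono' hgm.aestronglyMeasurable (.of_forall fun q => by
    rw [Real.norm_of_nonneg (hg_bounds q).1]; exact (hg_bounds q).2)
  have hmFCR_zero : ∫ q, d q ∂P = 0 → ∫ q, g q ∂P = 0 := fun h => le_antisymm
    (h ▸ integral_mono hgi hdi fun q => (hg_bounds q).2) (integral_nonneg fun q => (hg_bounds q).1)
  rw [← measureReal_def, measureReal_sum_pos_eq hZ hlawZ hindepZ hd hdm, ← mul_assoc,
    div_mul_cancel_of_imp hmFCR_zero]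
  exact integral_sum_div_max_one_sum_eq hZ hlawZ hindepZ hd hdm hgm hgi
    fun _ => mul_eq_zero_of_right _

/-- For fixed (non-random) selection rule D and prediction-set rule C, with iid pairs
(Xᵢ, Yᵢ) of common law P, FCR(D,C) = mFCR(D,C) · P(∑ᵢ D(X_{n+i}) > 0).
Conventions 0/0 = 0 are implicit in real division. -/
theorem stmt15 {Ω 𝓧 𝓨 : Type*} [MeasureSpace Ω] [IsProbabilityMeasure (ℙ : Measure Ω)]
    [MeasurableSpace 𝓧] [MeasurableSpace 𝓨]
    (n m : ℕ) (hm : 1 ≤ m)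
    (X : Fin (n + m) → Ω → 𝓧) (Y : Fin (n + m) → Ω → 𝓨)
    (P : Measure (𝓧 × 𝓨)) [IsProbabilityMeasure P]
    (hmeas : ∀ i, Measurable (fun ω => (X i ω, Y i ω)))
    (hlaw : ∀ i, Measure.map (fun ω => (X i ω, Y i ω)) ℙ = P)
    (hindep : iIndepFun (fun i ω => (X i ω, Y i ω)) ℙ)
    (D : 𝓧 → ℝ) (hD01 : ∀ x, D x = 0 ∨ D x = 1) (hDmeas : Measurable D)
    (C : 𝓧 → Set 𝓨) (hCmeas : MeasurableSet {q : 𝓧 × 𝓨 | q.2 ∈ C q.1}) :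
    ∫ ω,
      (∑ i : Fin m,
          (if Y (Fin.natAdd n i) ω ∈ C (X (Fin.natAdd n i) ω) then (0:ℝ) else 1) *
            D (X (Fin.natAdd n i) ω)) /
        max 1 (∑ i : Fin m, D (X (Fin.natAdd n i) ω)) ∂ℙ
      = ((∫ q, (if q.2 ∈ C q.1 then (0:ℝ) else 1) * D q.1 ∂P) / (∫ q, D q.1 ∂P)) *
        (ℙ {ω | 0 < ∑ i : Fin m, D (X (Fin.natAdd n i) ω)}).toReal :=
  stmt15_general n m X Y P hmeas hlaw hindep D hD01 hDmeas C hCmeas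
end
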